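/- Let H be the one-dimensional Dirac operator and let R_H^±(λ) = lim_{ε↓0} R_H(λ ± iε) be the boundary values of the resolvent on the continuous spectrum, defined for λ ∈ (−∞,−1) ∪ (1,∞) as bounded operators from L¹(ℝ, ℂ²) to L^∞(ℝ, ℂ²). Then for any λ₀ > 1 there exists C(λ₀) > 0 such that sup_{|λ| ≥ λ₀} ‖R_H^±(λ)‖_{L¹ → L^∞} ≤ C(λ₀). -/

import Mathlib

open MeasureTheory Complex Set
open scoped Real ENNReal

noncomputable section

/-- The action of the integral operator with the Green's function kernel
`(1/(2κ)) [[λ + iκ·sign(x−y), −1],[−1, −λ − iκ·sign(x−y)]] e^{−κ|x−y|}`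
of the resolvent of the one-dimensional Dirac operator. -/
def diracResolvent (lam kap : ℂ) (f : ℝ → ℂ × ℂ) (x : ℝ) : ℂ × ℂ :=
  ((2 * kap)⁻¹ * ∫ y : ℝ,
      (((lam + Complex.I * kap * (Real.sign (x - y) : ℂ)) * (f y).1 - (f y).2) *
        Complex.exp (-kap * (|x - y| : ℝ))),
   (2 * kap)⁻¹ * ∫ y : ℝ,
      ((-(f y).1 + (-lam - Complex.I * kap * (Real.sign (x - y) : ℂ)) * (f y).2) *
        Complex.exp (-kap * (|x - y| : ℝ))))

/-- The spectrum `(−∞,−1] ∪ [1,∞)` of the one-dimensional Dirac operator,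
as a subset of `ℂ`. -/
def diracSpectrum : Set ℂ := {z : ℂ | z.im = 0 ∧ 1 ≤ |z.re|}

/-! On the boundary `Re κ = 0` the factor `e^{−κ|x−y|}` has modulus one and every matrix entry
of the kernel is at most `|λ| + |κ| + 1`, so `R(λ)` maps `L¹` to `L^∞` with norm at most
`(|λ| + |κ| + 1) / (2|κ|)`. Since `|κ|² = λ² − 1`, we have `|λ| ≤ |κ| + 1`, and this bound is
at most `1 + 1/|κ| ≤ 1 + 1/√(λ₀² − 1)`. -/

lemma norm_exp_neg_mul_ofReal_le_one {kap : ℂ} (hkap : 0 ≤ kap.re) {r : ℝ} (hr : 0 ≤ r) :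
    ‖exp (-kap * r)‖ ≤ 1 := by
  rw [norm_exp, Real.exp_le_one_iff, neg_mul, neg_re, re_mul_ofReal]
  exact neg_nonpos.mpr (mul_nonneg hkap hr)

lemma norm_add_I_mul_sign_le (lam kap : ℂ) (u : ℝ) :
    ‖lam + I * kap * (Real.sign u : ℂ)‖ ≤ ‖lam‖ + ‖kap‖ := by
  have hsign : ‖(Real.sign u : ℂ)‖ ≤ 1 := by
    rcases Real.sign_apply_eq u with h | h | h <;> simp [h]
  calc ‖lam + I * kap * (Real.sign u : ℂ)‖
      ≤ ‖lam‖ + ‖kap‖ * ‖(Real.sign u : ℂ)‖ := by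
        grw [norm_add_le, norm_mul, norm_mul, norm_I, one_mul]
    _ ≤ ‖lam‖ + ‖kap‖ := by grw [hsign, mul_one]

lemma norm_mul_fst_sub_snd_le (c : ℂ) (p : ℂ × ℂ) : ‖c * p.1 - p.2‖ ≤ (‖c‖ + 1) * ‖p‖ := by
  grw [norm_sub_le, norm_mul, norm_fst_le p, norm_snd_le p]
  linarith

lemma norm_neg_fst_sub_mul_snd_le (c : ℂ) (p : ℂ × ℂ) : ‖-p.1 + -c * p.2‖ ≤ (‖c‖ + 1) * ‖p‖ := by
  grw [norm_add_le, norm_neg, norm_mul, norm_neg, norm_fst_le p, norm_snd_le p]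
  linarith

lemma norm_integral_mul_exp_neg_mul_abs_le {f : ℝ → ℂ × ℂ} (hf : Integrable f) {g : ℝ → ℂ}
    {M : ℝ} (hg : ∀ y, ‖g y‖ ≤ M * ‖f y‖) {kap : ℂ} (hkap : 0 ≤ kap.re) (x : ℝ) :
    ‖∫ y : ℝ, g y * exp (-kap * (|x - y| : ℝ))‖ ≤ M * ∫ y : ℝ, ‖f y‖ := by
  have hpointwise : ∀ y, ‖g y * exp (-kap * (|x - y| : ℝ))‖ ≤ M * ‖f y‖ := fun y => by
    grw [norm_mul, norm_exp_neg_mul_ofReal_le_one hkap (abs_nonneg _), mul_one, hg y]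
  rw [← integral_const_mul]
  exact norm_integral_le_of_norm_le (hf.norm.const_mul M) (.of_forall hpointwise)

lemma norm_diracResolvent_le (lam : ℂ) {kap : ℂ} (hkap : 0 ≤ kap.re) {f : ℝ → ℂ × ℂ}
    (hf : Integrable f) (x : ℝ) :
    ‖diracResolvent lam kap f x‖ ≤ (2 * ‖kap‖)⁻¹ * (‖lam‖ + ‖kap‖ + 1) * ∫ y : ℝ, ‖f y‖ := by
  have hcoef : ∀ u : ℝ, ‖lam + I * kap * (Real.sign u : ℂ)‖ + 1 ≤ ‖lam‖ + ‖kap‖ + 1 :=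
    fun u => by grw [norm_add_I_mul_sign_le]
  have hfst := norm_integral_mul_exp_neg_mul_abs_le hf (fun y =>
    (norm_mul_fst_sub_snd_le _ (f y)).trans (by grw [hcoef (x - y)])) hkap x
  have hsnd := norm_integral_mul_exp_neg_mul_abs_le hf (fun y =>
    (norm_neg_fst_sub_mul_snd_le _ (f y)).trans (by grw [hcoef (x - y)])) hkap x
  -- `-(λ + iκ·sign)` into the definition's `-λ - iκ·sign`
  simp only [neg_add'] at hsnd
  have hinv : ‖(2 * kap)⁻¹‖ = (2 * ‖kap‖)⁻¹ := by simp
  rw [diracResolvent, Prod.norm_def, mul_assoc]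
  refine max_le ?_ ?_
  · grw [norm_mul, hinv, hfst]
  · grw [norm_mul, hinv, hsnd]

lemma norm_sq_eq_of_sq_add_sq_eq_one {lam : ℝ} {kap : ℂ} (h : kap ^ 2 + (lam : ℂ) ^ 2 = 1)
    (hlam : 1 ≤ |lam|) : ‖kap‖ ^ 2 = lam ^ 2 - 1 := by
  have hkap : kap ^ 2 = ((1 - lam ^ 2 : ℝ) : ℂ) := by push_cast; linear_combination h
  have hlam2 : 1 ≤ lam ^ 2 := by nlinarith [sq_abs lam, abs_nonneg lam]
  rw [← norm_pow, hkap, norm_real, Real.norm_eq_abs, abs_of_nonpos (by linarith)]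
  ring

lemma inv_two_mul_abs_add_add_one_le {lam₀ lam k : ℝ} (hlam₀ : 1 < lam₀) (hlam : lam₀ ≤ |lam|)
    (hk : 0 ≤ k) (hk2 : k ^ 2 = lam ^ 2 - 1) :
    (2 * k)⁻¹ * (|lam| + k + 1) ≤ 1 + 1 / √(lam₀ ^ 2 - 1) := by
  set s := √(lam₀ ^ 2 - 1)
  have hs : 0 < s := Real.sqrt_pos.mpr (by nlinarith)
  have hsk : s ≤ k := Real.sqrt_le_iff.mpr ⟨hk, by nlinarith [sq_abs lam]⟩
  have hk0 : 0 < k := hs.trans_le hsk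
  have hlamk : |lam| ≤ k + 1 := by nlinarith [sq_abs lam, abs_nonneg lam]
  calc (2 * k)⁻¹ * (|lam| + k + 1) ≤ (2 * k)⁻¹ * (2 * (k + 1)) := by gcongr; linarith
    _ = 1 + 1 / k := by field_simp
    _ ≤ 1 + 1 / s := by gcongr

/-- The boundary values `R_H^±(λ)` of the resolvent on the continuous spectrum
(real `λ` with `|λ| > 1`, purely imaginary `κ` with `κ² + λ² = 1`) are bounded from
`L¹(ℝ,ℂ²)` to `L^∞(ℝ,ℂ²)`, uniformly for `|λ| ≥ λ₀ > 1`. -/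
theorem dirac_resolvent_boundary_uniform_bound :
    ∀ lam₀ : ℝ, 1 < lam₀ →
      ∃ C : ℝ, 0 < C ∧
        ∀ lam : ℝ, lam₀ ≤ |lam| →
          ∀ kap : ℂ, kap ^ 2 + (lam : ℂ) ^ 2 = 1 → kap.re = 0 →
            ∀ f : ℝ → ℂ × ℂ, Integrable f volume →
              ∀ x : ℝ, ‖diracResolvent (lam : ℂ) kap f x‖ ≤ C * ∫ y : ℝ, ‖f y‖ := by
  intro lam₀ hlam₀
  refine ⟨1 + 1 / √(lam₀ ^ 2 - 1), by positivity, ?_⟩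
  intro lam hlam kap hkap hre f hf x
  have hnorm := norm_sq_eq_of_sq_add_sq_eq_one hkap (by linarith)
  have hC := inv_two_mul_abs_add_add_one_le hlam₀ hlam (norm_nonneg kap) hnorm
  calc ‖diracResolvent lam kap f x‖
      ≤ (2 * ‖kap‖)⁻¹ * (|lam| + ‖kap‖ + 1) * ∫ y : ℝ, ‖f y‖ := by
        simpa using norm_diracResolvent_le lam hre.ge hf x
    _ ≤ (1 + 1 / √(lam₀ ^ 2 - 1)) * ∫ y : ℝ, ‖f y‖ := by gcongr
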